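/- Σ_{n=1}^{∞} n^2·J_n(nz) = z/(2(1−z)^4) for real z with |z| sufficiently small, where J_n is the Bessel function of the first kind. -/

import Mathlib

/-- The Bessel function of the first kind of nonnegative integer order `n`. -/
noncomputable def besselJ (n : ℕ) (x : ℝ) : ℝ :=
  ∑' m : ℕ, (-1) ^ m / (m.factorial * (n + m).factorial) * (x / 2) ^ (n + 2 * m)


open PowerSeries Finset

noncomputable section

/-- coefficients of 2·sinh -/
def sc (n : ℕ) : ℚ := (1 - (-1)^n) / n.factorial

/-- `S = exp - exp(-·) = 2 sinh` as a formal power series over ℚ. -/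
def Ssinh : PowerSeries ℚ := exp ℚ - rescale (-1) (exp ℚ)

lemma coeff_Ssinh (n : ℕ) : (coeff n) Ssinh = sc n := by
  simp [Ssinh, coeff_exp, coeff_rescale, sc, sub_div]
  ring

def Tser : PowerSeries ℚ := PowerSeries.mk fun n => sc (n+1)

def Vser : PowerSeries ℚ := PowerSeries.mk fun n => sc (n+3)

lemma S_eq : Ssinh = X * Tser := by
  ext n
  cases n with
  | zero => simp [coeff_Ssinh, sc]
  | succ n => simp [coeff_Ssinh, coeff_succ_X_mul, Tser]

lemma T_eq : Tser = C 2 + X^2 * Vser := by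
  ext n
  match n with
  | 0 => simp [Tser, sc, coeff_X_pow_mul']; norm_num
  | 1 => simp [Tser, sc, coeff_X_pow_mul']
  | (n+2) => simp [Tser, Vser, sc, coeff_X_pow_mul', coeff_C]

end
noncomputable section
lemma coeff0_V : constantCoeff Vser = 1/3 := by
  rw [← coeff_zero_eq_constantCoeff]
  simp [Vser, sc, Nat.factorial]
  norm_num

lemma coeff2_Tpow (k : ℕ) : (coeff 2) (Tser ^ k) = k * 2^(k-1) / 3 := by
  rw [T_eq, add_comm (C 2), add_pow]
  rw [map_sum]
  rw [Finset.sum_eq_single 1]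
  · cases k with
    | zero => simp
    | succ k =>
      have : (X^2 * Vser)^1 * (C 2)^(k+1-1) * ((k+1).choose 1 : ℚ⟦X⟧)
          = X^2 * (Vser * (C 2)^k * ((k+1) : ℚ⟦X⟧)) := by
        push_cast
        ring_nf
        simp
        ring
      rw [this, coeff_X_pow_mul']
      simp [coeff0_V]
      push_cast
      ring
  · intro j hj hj1
    rcases Nat.lt_or_ge j 1 with h | h
    · interval_cases j
      · simp only [pow_zero, one_mul, Nat.choose_zero_right, Nat.cast_one, mul_one, ← map_pow,
          coeff_C]
        simp
    · have h2 : 2 ≤ j := by omega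
      have : (X^2 * Vser)^j * (C 2)^(k-j) * (k.choose j : ℚ⟦X⟧)
          = X^(2*j) * (Vser^j * (C 2)^(k-j) * (k.choose j : ℚ⟦X⟧)) := by
        rw [mul_pow, pow_mul]
        ring
      rw [this, coeff_X_pow_mul']
      rw [if_neg (by omega)]
  · intro h
    have hk : k = 0 := by simp at h; omega
    subst hk
    simp
end
noncomputable section
lemma coeff_Spow (k : ℕ) : (coeff (k+2)) (Ssinh ^ k) = k * 2^(k-1) / 3 := by
  rw [S_eq, mul_pow, show k + 2 = 2 + k by ring, coeff_X_pow_mul, coeff2_Tpow]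

lemma Spow_eq_sum (k : ℕ) : Ssinh ^ k
    = ∑ m ∈ Finset.range (k+1), (-1:ℚ⟦X⟧)^(m+k) * (k.choose m : ℚ⟦X⟧)
        * rescale ((2*m : ℚ) - k) (exp ℚ) := by
  rw [Ssinh, sub_pow]
  refine Finset.sum_congr rfl fun m hm => ?_
  have hmk : m ≤ k := by simp at hm; omega
  have h1 : (exp ℚ) ^ m = rescale (m : ℚ) (exp ℚ) := exp_pow_eq_rescale_exp m
  have h2 : (rescale (-1) (exp ℚ)) ^ (k - m) = rescale (-((k:ℚ) - m)) (exp ℚ) := by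
    rw [← map_pow, exp_pow_eq_rescale_exp, rescale_rescale]
    congr 1
    push_cast [hmk]
    ring
  have h3 : rescale (m:ℚ) (exp ℚ) * rescale (-((k:ℚ) - m)) (exp ℚ)
      = rescale ((2*m:ℚ) - k) (exp ℚ) := by
    rw [exp_mul_exp_eq_exp_add]
    congr 1
    ring
  rw [h1, h2, ← h3]
  ring

lemma full_sum (k : ℕ) :
    ∑ m ∈ Finset.range (k+1), (-1:ℚ)^m * (k.choose m) * ((k:ℚ) - 2*m)^(k+2)
      = (k:ℚ) * 2^(k-1) / 3 * (k+2).factorial := by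
  have h := coeff_Spow k
  rw [Spow_eq_sum, map_sum] at h
  have h2 : ∀ m ∈ Finset.range (k+1),
      (coeff (k+2)) ((-1:ℚ⟦X⟧)^(m+k) * (k.choose m : ℚ⟦X⟧)
        * rescale ((2*m : ℚ) - k) (exp ℚ))
      = (-1:ℚ)^m * (k.choose m) * ((k:ℚ) - 2*m)^(k+2) / (k+2).factorial := by
    intro m _
    have : (-1:ℚ⟦X⟧)^(m+k) * (k.choose m : ℚ⟦X⟧) = C ((-1:ℚ)^(m+k) * k.choose m) := by
      push_cast
      simp [map_mul, map_pow]
    rw [this, coeff_C_mul, coeff_rescale, coeff_exp]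
    have : ((2*m : ℚ) - k)^(k+2) = (-1)^(k+2) * ((k:ℚ) - 2*m)^(k+2) := by
      rw [← neg_pow, neg_sub]
    rw [this]
    have hsgn : (-1:ℚ)^(m+k) * (-1)^(k+2) = (-1)^m := by
      rw [← pow_add]
      have : m + k + (k+2) = m + 2*(k+1) := by ring
      rw [this, pow_add, pow_mul]
      simp
    simp only [Algebra.algebraMap_self, RingHom.id_apply]
    field_simp
    linear_combination ((k.choose m : ℚ) * ((k:ℚ)-2*m)^(k+2)) * hsgn
  rw [Finset.sum_congr rfl h2] at h
  have hf : ((k+2).factorial : ℚ) ≠ 0 := by positivity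
  rw [← Finset.sum_div, div_eq_iff hf] at h
  exact h
end
section
open Finset

private def bq (k m : ℕ) : ℚ := (-1:ℚ)^m * (k.choose m) * ((k:ℚ) - 2*m)^(k+2)

lemma bq_symm (k m : ℕ) (h : m ≤ k) : bq k (k - m) = bq k m := by
  obtain ⟨d, rfl⟩ : ∃ d, k = m + d := ⟨k - m, by omega⟩
  have h1 : m + d - m = d := by omega
  unfold bq
  have hc := Nat.choose_symm h
  rw [h1] at hc
  rw [h1, hc]
  push_cast
  have hbase : ((m:ℚ)+d) - 2*d = -(((m:ℚ)+d) - 2*m) := by ring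
  rw [hbase, neg_pow (((m:ℚ)+d) - 2*m) (m+d+2)]
  have h2 : ((-1:ℚ))^d * (-1)^(m+d+2) = (-1)^m := by
    rw [← pow_add, show d+(m+d+2) = m+2*(d+1) by ring, pow_add, pow_mul]
    norm_num
  have h3 : (-1:ℚ)^d * ((m+d).choose m : ℚ) * ((-1)^(m+d+2) * (((m:ℚ)+d) - 2*m)^(m+d+2))
      = ((-1:ℚ)^d * (-1)^(m+d+2)) * (((m+d).choose m : ℚ) * (((m:ℚ)+d) - 2*m)^(m+d+2)) := by
    ring_nf
  rw [h3, h2]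
  ring_nf

lemma half_sum (k : ℕ) :
    ∑ m ∈ range (k+1), (if 2*m ≤ k then bq k m else 0)
      = (k:ℚ) * 2^(k-1) / 6 * (k+2).factorial := by
  have hmid : ∀ m, 2*m = k → bq k m = 0 := by
    intro m hm
    unfold bq
    have : ((k:ℚ) - 2*m) = 0 := by
      push_cast [← hm]
      ring
    rw [this, zero_pow (by omega)]
    ring
  have hA : ∑ m ∈ range (k+1), (if 2*m ≤ k then bq k m else 0)
      = ∑ m ∈ (range (k+1)).filter (fun m => 2*m < k), bq k m := by
    rw [← Finset.sum_filter]
    refine (Finset.sum_subset ?_ ?_).symm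
    · intro x hx
      simp only [mem_filter, mem_range] at hx ⊢
      omega
    · intro x hx hx2
      simp only [mem_filter, mem_range] at hx hx2
      exact hmid x (by omega)
  have hB : ∑ m ∈ (range (k+1)).filter (fun m => ¬ 2*m ≤ k), bq k m
      = ∑ m ∈ (range (k+1)).filter (fun m => 2*m < k), bq k m := by
    refine Finset.sum_nbij' (fun m => k - m) (fun m => k - m) ?_ ?_ ?_ ?_ ?_
    · intro a ha; simp only [mem_filter, mem_range] at ha ⊢; omega
    · intro a ha; simp only [mem_filter, mem_range] at ha ⊢; omega
    · intro a ha; simp only [mem_filter, mem_range] at ha; show k - (k - a) = a; omega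
    · intro a ha; simp only [mem_filter, mem_range] at ha; show k - (k - a) = a; omega
    · intro a ha
      simp only [mem_filter, mem_range] at ha
      exact (bq_symm k a (by omega)).symm
  have hsplit : ∑ m ∈ range (k+1), bq k m
      = ∑ m ∈ (range (k+1)).filter (fun m => 2*m ≤ k), bq k m
        + ∑ m ∈ (range (k+1)).filter (fun m => ¬ 2*m ≤ k), bq k m :=
    (Finset.sum_filter_add_sum_filter_not _ _ _).symm
  have hfull : ∑ m ∈ range (k+1), bq k m = (k:ℚ) * 2^(k-1) / 3 * (k+2).factorial :=
    full_sum k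
  have hA' : ∑ m ∈ (range (k+1)).filter (fun m => 2*m ≤ k), bq k m
      = ∑ m ∈ range (k+1), (if 2*m ≤ k then bq k m else 0) := by
    rw [← Finset.sum_filter]
  rw [hsplit, hA', hA, hB] at hfull
  rw [hA]
  linarith [hfull]
end
section
open Finset

lemma key_rat (k : ℕ) :
    ∑ m ∈ range (k+1), (if 2*m ≤ k then
        (-1:ℚ)^m * ((k - 2*m : ℕ):ℚ)^(k+2) / ((m.factorial : ℚ) * ((k-m).factorial : ℚ)) else 0)
      = (k:ℚ)*(k+1)*(k+2)*2^(k-1)/6 := by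
  have hterm : ∀ m ∈ range (k+1), (if 2*m ≤ k then
        (-1:ℚ)^m * ((k - 2*m : ℕ):ℚ)^(k+2) / ((m.factorial : ℚ) * ((k-m).factorial : ℚ)) else 0)
      = (if 2*m ≤ k then bq k m else 0) / (k.factorial : ℚ) := by
    intro m hm
    simp only [mem_range] at hm
    split
    · next h =>
      have hmk : m ≤ k := by omega
      have hfac : (k.choose m : ℚ) * m.factorial * (k-m).factorial = k.factorial := by
        exact_mod_cast congrArg (Nat.cast : ℕ → ℚ) (Nat.choose_mul_factorial_mul_factorial hmk)
      have hcast : ((k - 2*m : ℕ):ℚ) = (k:ℚ) - 2*m := by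
        push_cast [h]
        ring
      have hm0 : (m.factorial : ℚ) ≠ 0 := by positivity
      have hk0 : ((k-m).factorial : ℚ) ≠ 0 := by positivity
      have hkf : (k.factorial : ℚ) ≠ 0 := by positivity
      rw [hcast]
      unfold bq
      have hc0 : (k.choose m : ℚ) ≠ 0 := by exact_mod_cast (Nat.choose_pos hmk).ne'
      rw [← hfac]
      field_simp
    · simp
  rw [Finset.sum_congr rfl hterm, ← Finset.sum_div, half_sum]
  have h2 : ((k+2).factorial : ℚ) = (k+2) * (k+1) * k.factorial := by
    rw [Nat.factorial_succ, Nat.factorial_succ]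
    push_cast
    ring
  have hkf : (k.factorial : ℚ) ≠ 0 := by positivity
  rw [h2]
  field_simp

lemma key_real (k : ℕ) :
    ∑ m ∈ range (k+1), (if 2*m ≤ k then
        (-1:ℝ)^m * ((k - 2*m : ℕ):ℝ)^(k+2) / ((m.factorial : ℝ) * ((k-m).factorial : ℝ)) else 0)
      = (k:ℝ)*(k+1)*(k+2)*2^(k-1)/6 := by
  have h := congrArg (Rat.cast : ℚ → ℝ) (key_rat k)
  rw [Rat.cast_sum] at h
  calc ∑ m ∈ range (k+1), (if 2*m ≤ k then
        (-1:ℝ)^m * ((k - 2*m : ℕ):ℝ)^(k+2) / ((m.factorial : ℝ) * ((k-m).factorial : ℝ)) else 0)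
      = ∑ m ∈ range (k+1), ((if 2*m ≤ k then
        (-1:ℚ)^m * ((k - 2*m : ℕ):ℚ)^(k+2) / ((m.factorial : ℚ) * ((k-m).factorial : ℚ)) else 0 : ℚ) : ℝ) := by
        refine Finset.sum_congr rfl fun m hm => ?_
        split
        · push_cast; ring
        · simp
    _ = (((k:ℚ)*(k+1)*(k+2)*2^(k-1)/6 : ℚ) : ℝ) := h
    _ = (k:ℝ)*(k+1)*(k+2)*2^(k-1)/6 := by push_cast; ring
end
section PartB
open Finset

lemma fact_mul_pow_le (n m : ℕ) : n.factorial * n^m ≤ (n+m).factorial := by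
  induction m with
  | zero => simp
  | succ m ih =>
    calc n.factorial * n^(m+1) = (n.factorial * n^m) * n := by ring
    _ ≤ (n+m).factorial * n := Nat.mul_le_mul_right _ ih
    _ ≤ (n+m).factorial * (n+m+1) := Nat.mul_le_mul_left _ (by omega)
    _ = (n + (m+1)).factorial := by
        rw [show n+(m+1) = (n+m)+1 by ring, Nat.factorial_succ]
        ring

lemma tsum_pow_div_factorial' (x : ℝ) : ∑' m : ℕ, x^m / (m.factorial : ℝ) = Real.exp x := by
  rw [Real.exp_eq_exp_ℝ, NormedSpace.exp_eq_tsum_div]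

lemma exp_base_lt_one : Real.exp 2 * Real.exp (1/64) / 8 < 1 := by
  have h1 : Real.exp 1 < 2.7182818286 := Real.exp_one_lt_d9
  have h2 : Real.exp 2 = Real.exp 1 * Real.exp 1 := by
    rw [← Real.exp_add]; norm_num
  have h3 : Real.exp (1/64) ≤ 64/63 := by
    have h := Real.add_one_le_exp (-(1/64 : ℝ))
    rw [Real.exp_neg] at h
    have hpos : (0:ℝ) < Real.exp (1/64) := Real.exp_pos _
    rw [le_inv_comm₀ (by norm_num) hpos] at h
    linarith [h]
  have h4 : Real.exp 2 < 7.3891 := by nlinarith [Real.exp_pos 1]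
  nlinarith [Real.exp_pos 2, Real.exp_pos (1/64:ℝ)]

end PartB
noncomputable section PartB2
open Finset

private def tt (z : ℝ) (p : ℕ × ℕ) : ℝ :=
  ((p.1:ℝ))^2 * ((-1:ℝ)^p.2 / ((p.2.factorial : ℝ) * ((p.1+p.2).factorial : ℝ))
    * (((p.1:ℝ)*z)/2)^(p.1+2*p.2))

private def gg (p : ℕ × ℕ) : ℝ :=
  (p.1:ℝ)^2 * (Real.exp 2/8)^p.1 * ((p.1:ℝ)/64)^p.2 / (p.2.factorial : ℝ)

lemma gg_nonneg (p : ℕ × ℕ) : 0 ≤ gg p := by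
  unfold gg
  positivity

lemma pow_self_le (n : ℕ) : (n:ℝ)^n / (n.factorial : ℝ) ≤ Real.exp 2 ^ n := by
  calc (n:ℝ)^n / (n.factorial : ℝ) ≤ Real.exp (n:ℝ) :=
        Real.pow_div_factorial_le_exp (x := (n:ℝ)) (Nat.cast_nonneg n) n
  _ = Real.exp 1 ^ n := by
      rw [← Real.exp_nat_mul]
      norm_num
  _ ≤ Real.exp 2 ^ n := pow_le_pow_left₀ (Real.exp_pos 1).le (Real.exp_le_exp.mpr one_le_two) n

lemma tt_abs_le {z : ℝ} (hz : |z| ≤ 1/4) (p : ℕ × ℕ) : |tt z p| ≤ gg p := by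
  obtain ⟨n, m⟩ := p
  rcases Nat.eq_zero_or_pos n with rfl | hn
  · simp [tt]
    exact gg_nonneg (0, m)
  have habs : |tt z (n,m)| = (n:ℝ)^2 * (((n:ℝ)*|z|)/2)^(n+2*m)
      / ((m.factorial:ℝ) * ((n+m).factorial:ℝ)) := by
    unfold tt
    dsimp only
    simp only [abs_mul, abs_div, abs_pow, abs_neg, abs_one, one_pow, Nat.abs_cast, abs_two]
    ring
  rw [habs]
  have hfac : (n.factorial : ℝ) * (n:ℝ)^m ≤ ((n+m).factorial : ℝ) := by
    exact_mod_cast Nat.cast_le.mpr (fact_mul_pow_le n m)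
  have hn1 : (1:ℝ) ≤ (n:ℝ) := by exact_mod_cast hn
  have hn0 : (0:ℝ) ≤ (n:ℝ) := by positivity
  have hb1 : (0:ℝ) ≤ (n:ℝ)*|z|/2 := by positivity
  have hb2 : (n:ℝ)*|z|/2 ≤ (n:ℝ)/8 := by nlinarith [abs_nonneg z]
  calc (n:ℝ)^2 * (((n:ℝ)*|z|)/2)^(n+2*m) / ((m.factorial:ℝ) * ((n+m).factorial:ℝ))
      ≤ (n:ℝ)^2 * ((n:ℝ)/8)^(n+2*m) / ((m.factorial:ℝ) * ((n+m).factorial:ℝ)) := by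
        gcongr
    _ ≤ (n:ℝ)^2 * ((n:ℝ)/8)^(n+2*m) / ((m.factorial:ℝ) * ((n.factorial:ℝ) * (n:ℝ)^m)) := by
        gcongr
    _ = (n:ℝ)^2 * ((n:ℝ)^n/(n.factorial:ℝ)) * (1/8)^n * (((n:ℝ)/64)^m / (m.factorial:ℝ)) := by
        have hnne : (n:ℝ) ≠ 0 := by positivity
        have h8 : ((n:ℝ)/8)^(n+2*m) = (n:ℝ)^n * ((n:ℝ)^2)^m / (8^n * 64^m) := by
          rw [div_pow, pow_add, pow_add, pow_mul, pow_mul]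
          norm_num
        rw [h8]
        have hm0 : (m.factorial : ℝ) ≠ 0 := by positivity
        have hnf : (n.factorial : ℝ) ≠ 0 := by positivity
        simp only [one_div, inv_pow, div_pow]
        field_simp
        ring
    _ ≤ (n:ℝ)^2 * Real.exp 2 ^ n * (1/8)^n * (((n:ℝ)/64)^m / (m.factorial:ℝ)) := by
        gcongr
        exact pow_self_le n
    _ = gg (n, m) := by
        unfold gg
        dsimp only
        rw [div_pow (Real.exp 2) 8 n]
        simp only [one_div, inv_pow, div_pow]
        field_simp

end PartB2
noncomputable section PartB3
open Finset

lemma gg_summable : Summable gg := by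
  rw [summable_prod_of_nonneg gg_nonneg]
  constructor
  · intro n
    have h : ∀ m : ℕ, ((n:ℝ)^2 * (Real.exp 2/8)^n) * (((n:ℝ)/64)^m / (m.factorial:ℝ))
        = gg (n, m) := by
      intro m
      unfold gg
      ring
    exact ((Real.summable_pow_div_factorial ((n:ℝ)/64)).mul_left
      ((n:ℝ)^2 * (Real.exp 2/8)^n)).congr h
  · have hval : ∀ n : ℕ, ∑' m, gg (n, m)
        = (n:ℝ)^2 * (Real.exp 2/8 * Real.exp (1/64))^n := by
      intro n
      have h : (fun m : ℕ => gg (n, m))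
          = fun m => ((n:ℝ)^2 * (Real.exp 2/8)^n) * (((n:ℝ)/64)^m / (m.factorial:ℝ)) := by
        funext m
        unfold gg
        ring
      rw [h, tsum_mul_left, tsum_pow_div_factorial']
      rw [show ((n:ℝ)/64) = (n:ℕ) * (1/64 : ℝ) by push_cast; ring, Real.exp_nat_mul]
      rw [mul_pow]
      ring
    have hb : ‖Real.exp 2/8 * Real.exp (1/64)‖ < 1 := by
      rw [Real.norm_eq_abs, abs_of_pos (by positivity)]
      have := exp_base_lt_one
      linarith [this]
    exact ((summable_pow_mul_geometric_of_norm_lt_one 2 hb).congr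
      fun n => (hval n).symm)

lemma tt_summable {z : ℝ} (hz : |z| ≤ 1/4) : Summable (tt z) := by
  rw [← summable_abs_iff]
  exact Summable.of_nonneg_of_le (fun p => abs_nonneg _) (tt_abs_le hz) gg_summable

end PartB3
noncomputable section PartB4
open Finset Function

private def ss (z : ℝ) (q : ℕ × ℕ) : ℝ :=
  if 2*q.2 ≤ q.1 then tt z (q.1 - 2*q.2, q.2) else 0

private def phi (p : ℕ × ℕ) : ℕ × ℕ := (p.1 + 2*p.2, p.2)

lemma phi_inj : Injective phi := by
  intro p q h
  unfold phi at h
  obtain ⟨h1, h2⟩ := Prod.mk.injEq .. ▸ h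
  exact Prod.ext (by omega) h2

lemma ss_comp (z : ℝ) (p : ℕ × ℕ) : ss z (phi p) = tt z p := by
  unfold ss phi
  dsimp only
  rw [if_pos (by omega)]
  congr 1
  exact Prod.ext (by dsimp; omega) rfl

lemma ss_supp (z : ℝ) : support (ss z) ⊆ Set.range phi := by
  intro q hq
  unfold ss at hq
  by_cases h : 2*q.2 ≤ q.1
  · exact ⟨(q.1 - 2*q.2, q.2), Prod.ext (by dsimp [phi]; omega) rfl⟩
  · simp [h] at hq

lemma tsum_tt_eq (z : ℝ) : ∑' q, ss z q = ∑' p, tt z p := by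
  rw [← phi_inj.tsum_eq (ss_supp z)]
  exact tsum_congr (ss_comp z)

lemma ss_summable {z : ℝ} (hz : |z| ≤ 1/4) : Summable (ss z) := by
  rw [← phi_inj.summable_iff (fun x hx => of_not_not fun h => hx (ss_supp z h))]
  exact (tt_summable hz).congr fun p => (ss_comp z p).symm

lemma innerSumEq (z : ℝ) (k : ℕ) :
    ∑' m, ss z (k, m) = (k:ℝ)*(k+1)*(k+2)/12 * z^k := by
  rw [tsum_eq_sum (s := range (k+1)) (f := fun m => ss z (k, m))
    (fun m hm => by
      unfold ss
      dsimp only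
      rw [if_neg (by simp at hm; omega)])]
  have hterm : ∀ m ∈ range (k+1), ss z (k, m)
      = (if 2*m ≤ k then
          (-1:ℝ)^m * ((k - 2*m : ℕ):ℝ)^(k+2) / ((m.factorial:ℝ) * ((k-m).factorial:ℝ))
        else 0) * (z/2)^k := by
    intro m _
    unfold ss
    dsimp only
    split
    · next h =>
      unfold tt
      dsimp only
      rw [show (k - 2*m) + m = k - m by omega, show (k - 2*m) + 2*m = k by omega]
      rw [show ((k - 2*m : ℕ):ℝ) * z / 2 = ((k - 2*m : ℕ):ℝ) * (z/2) by ring, mul_pow]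
      rw [show k + 2 = k + 2 by rfl]
      have : ((k - 2*m : ℕ):ℝ)^(k+2) = ((k - 2*m : ℕ):ℝ)^k * ((k - 2*m : ℕ):ℝ)^2 := by
        rw [pow_add]
      rw [this]
      ring
    · ring
  rw [Finset.sum_congr rfl hterm, ← Finset.sum_mul, key_real]
  rcases k with _ | j
  · norm_num
  · have h2 : ((j:ℕ)+1:ℕ) - 1 = j := by omega
    rw [h2, div_pow]
    have h3 : (2:ℝ)^(j+1) = 2*2^j := by ring
    have h4 : (2:ℝ)^j ≠ 0 := by positivity
    push_cast
    field_simp [h3]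
    ring

end PartB4
noncomputable section PartB5
open Finset

lemma choose_three (n : ℕ) : (((n+3).choose 3 : ℕ) : ℝ) = (n+1)*(n+2)*(n+3)/6 := by
  have hf := Nat.choose_mul_factorial_mul_factorial (Nat.le_add_left 3 n)
  have e0 : n + 3 - 3 = n := by omega
  rw [e0] at hf
  have e1 : ((n+3).factorial : ℝ) = (n+3)*(n+2)*(n+1)*(n.factorial) := by
    rw [show n+3 = (n+2)+1 from rfl, Nat.factorial_succ, show n+2 = (n+1)+1 from rfl,
      Nat.factorial_succ, Nat.factorial_succ]
    push_cast
    ring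
  have hfr : (((n+3).choose 3 : ℕ) : ℝ) * 6 * (n.factorial : ℝ) = ((n+3).factorial : ℝ) := by
    exact_mod_cast congrArg (Nat.cast : ℕ → ℝ) hf
  have hn0 : (n.factorial : ℝ) ≠ 0 := by positivity
  rw [e1] at hfr
  have h6 := mul_right_cancel₀ hn0 hfr
  field_simp
  linear_combination h6

lemma final_series {z : ℝ} (hz : |z| < 1) :
    ∑' k : ℕ, (k:ℝ)*((k:ℝ)+1)*((k:ℝ)+2)/12 * z^k = z / (2*(1-z)^4) := by
  have h := hasSum_choose_mul_geometric_of_norm_lt_one 3 (r := z) (by rwa [Real.norm_eq_abs])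
  have h2 := h.mul_left (z/2)
  have h3 : (fun n : ℕ => (z/2) * (((n+3).choose 3 : ℕ) * z^n))
      = fun n : ℕ => ((n+1:ℕ):ℝ)*(((n+1:ℕ):ℝ)+1)*(((n+1:ℕ):ℝ)+2)/12 * z^(n+1) := by
    funext n
    rw [choose_three]
    push_cast
    ring
  rw [h3] at h2
  have h4 := (hasSum_nat_add_iff (f := fun k : ℕ => (k:ℝ)*((k:ℝ)+1)*((k:ℝ)+2)/12 * z^k) 1).mp h2
  have h5 : ∑ i ∈ range 1, ((i:ℝ)*((i:ℝ)+1)*((i:ℝ)+2)/12 * z^i) = 0 := by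
    simp
  rw [h5, add_zero] at h4
  rw [h4.tsum_eq]
  have h1z : (1:ℝ) - z ≠ 0 := by
    intro h0
    rw [show z = 1 by linarith] at hz
    norm_num at hz
  field_simp

end PartB5

theorem kapteyn_sum_sq_besselJ :
    ∃ R > (0 : ℝ), ∀ z : ℝ, |z| < R →
      ∑' n : ℕ, (n : ℝ) ^ 2 * besselJ n (n * z) = z / (2 * (1 - z) ^ 4) := by
  refine ⟨1/4, by norm_num, fun z hz => ?_⟩
  have hz4 : |z| ≤ 1/4 := le_of_lt hz
  have hz1 : |z| < 1 := lt_trans hz (by norm_num)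
  have hsum := tt_summable hz4
  calc ∑' n : ℕ, (n:ℝ)^2 * besselJ n (n*z)
      = ∑' n : ℕ, ∑' m : ℕ, tt z (n, m) := by
        refine tsum_congr fun n => ?_
        unfold besselJ
        rw [← tsum_mul_left]
        exact tsum_congr fun m => rfl
    _ = ∑' p : ℕ×ℕ, tt z p := (hsum.tsum_prod' hsum.prod_factor).symm
    _ = ∑' q : ℕ×ℕ, ss z q := (tsum_tt_eq z).symm
    _ = ∑' k : ℕ, ∑' m : ℕ, ss z (k, m) :=
        (ss_summable hz4).tsum_prod' (ss_summable hz4).prod_factor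
    _ = ∑' k : ℕ, (k:ℝ)*((k:ℝ)+1)*((k:ℝ)+2)/12 * z^k := tsum_congr (innerSumEq z)
    _ = z / (2*(1-z)^4) := final_series hz1
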